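/- arXiv:1810.06614 — 4 statements merged into one kernel-verified Lean document; each statement's English description precedes it below -/
import Mathlib

section
/- Let n ≥ 2 and let f : S^n → ℝ be continuous. Define g : ℝ^n → ℝ by g(y) = 2^{n−1} f(Λ^{−1}(y))/(1 + |y|²)^{n−1}. Then for every ψ ∈ S^n and 0 ≤ ρ < 1 with ρ ≠ ψ_{n+1}, the spherical transform and the spherical mean transform satisfy Sf(ψ, ρ) = Rg( ψ*/(ρ − ψ_{n+1}) , √(1 − ρ²)/|ρ − ψ_{n+1}| ), where ψ* = (ψ₁,…,ψ_n). -/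
open MeasureTheory

/-- The inverse stereographic projection
`Λ⁻¹(y) = (2y₁/(1+|y|²), …, 2y_n/(1+|y|²), (−1+|y|²)/(1+|y|²))`. -/
noncomputable def stereoInv (n : ℕ) (y : EuclideanSpace ℝ (Fin n)) :
    EuclideanSpace ℝ (Fin (n + 1)) :=
  WithLp.toLp 2 fun i =>
    Fin.lastCases ((-1 + ‖y‖ ^ 2) / (1 + ‖y‖ ^ 2))
      (fun j : Fin n => 2 * y j / (1 + ‖y‖ ^ 2)) i

/-- The spherical transform of `f : Sⁿ → ℝ`:
`Sf(ψ, ρ) = ∫_{{x ∈ Sⁿ : x·ψ = ρ}} f dH^{n−1}`. -/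
noncomputable def sphericalTransform (n : ℕ) (f : EuclideanSpace ℝ (Fin (n + 1)) → ℝ)
    (ψ : EuclideanSpace ℝ (Fin (n + 1))) (ρ : ℝ) : ℝ :=
  ∫ x in {x : EuclideanSpace ℝ (Fin (n + 1)) | ‖x‖ = 1 ∧ ∑ i, x i * ψ i = ρ},
    f x ∂(μH[(n : ℝ) - 1])

/-- The spherical mean transform of `g : ℝⁿ → ℝ`:
`Rg(x, t) = ∫_{{y : |y − x| = t}} g dH^{n−1}`. -/
noncomputable def sphericalMeanTransform (n : ℕ) (g : EuclideanSpace ℝ (Fin n) → ℝ)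
    (x : EuclideanSpace ℝ (Fin n)) (t : ℝ) : ℝ :=
  ∫ y in Metric.sphere x t, g y ∂(μH[(n : ℝ) - 1])

/-- `ψ* / (ρ - ψ_{n+1})`, the center of the image sphere. -/
noncomputable def projCenter (n : ℕ) (ψ : EuclideanSpace ℝ (Fin (n + 1))) (ρ : ℝ) :
    EuclideanSpace ℝ (Fin n) :=
  WithLp.toLp 2 fun i => ψ i.castSucc / (ρ - ψ (Fin.last n))

/-!
The inverse stereographic projection is conformal in a strong, global sense:
`|Λ⁻¹y - Λ⁻¹y'|² = λ(y) λ(y') |y - y'|²` with `λ(y) = 2 / (1 + |y|²)`.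
On a set where `λ` varies by at most a factor `r`, `Λ⁻¹` is bi-Lipschitz with constants whose
ratio is `r`, so cutting the domain into the layers `r^j ≤ λ < r^(j+1)` and letting `r → 1`
shows that `Λ⁻¹` carries `λ^(n-1) · H^(n-1)` to `H^(n-1)`. Since
`2^(n-1) / (1 + |y|²)^(n-1) = λ(y)^(n-1)`, the theorem is this change of variables applied to
the sphere `|y - ψ*/(ρ - ψ_{n+1})| = √(1 - ρ²)/|ρ - ψ_{n+1}|`, whose image under `Λ⁻¹` is the
section `{x ∈ Sⁿ : x·ψ = ρ}`: for `x = Λ⁻¹y` the quantities `x·ψ - ρ` and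
`|y - ψ*/(ρ - ψ_{n+1})|² - (1 - ρ²)/(ρ - ψ_{n+1})²` differ by a nonvanishing factor.
-/

open Set Function Filter Topology
open scoped ENNReal NNReal

theorem ENNReal.le_of_forall_one_lt_rpow_mul_le {a b : ℝ≥0∞} {d : ℝ}
    (h : ∀ r : ℝ≥0, 1 < r → a ≤ (r : ℝ≥0∞) ^ d * b) : a ≤ b := by
  have hlim : Tendsto (fun r : ℝ≥0 => (r : ℝ≥0∞) ^ d * b) (𝓝[>] 1) (𝓝 b) := by
    have h1 := ((ENNReal.continuous_rpow_const (y := d)).comp ENNReal.continuous_coe).tendsto 1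
    simpa using (ENNReal.Tendsto.mul_const (h1.mono_left nhdsWithin_le_nhds)
      (Or.inl (by simp)) : Tendsto _ _ (𝓝 (((1 : ℝ≥0) : ℝ≥0∞) ^ d * b)))
  exact ge_of_tendsto hlim (eventually_nhdsWithin_of_forall h)

section DistSqEq

variable {X Y : Type*} [MetricSpace X] [MetricSpace Y] {Φ : X → Y} {A : Set X} {w : X → ℝ≥0}

theorem injOn_of_dist_sq_eq (hw_pos : ∀ x ∈ A, 0 < w x)
    (hdist : ∀ x ∈ A, ∀ x' ∈ A, dist (Φ x) (Φ x') ^ 2 = w x * w x' * dist x x' ^ 2) :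
    InjOn Φ A := fun x hx x' hx' h => by
  have key := hdist x hx x' hx'
  rw [h, dist_self, zero_pow two_ne_zero, eq_comm] at key
  have hpos : (0 : ℝ) < w x * w x' := by
    have := hw_pos x hx
    have := hw_pos x' hx'
    positivity
  simpa [hpos.ne'] using key

theorem dist_image_bounds_of_dist_sq_eq
    (hdist : ∀ x ∈ A, ∀ x' ∈ A, dist (Φ x) (Φ x') ^ 2 = w x * w x' * dist x x' ^ 2)
    {s : Set X} (hsA : s ⊆ A) {a b : ℝ≥0} (hsw : ∀ x ∈ s, w x ∈ Icc a b)
    {x x' : X} (hx : x ∈ s) (hx' : x' ∈ s) :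
    a * dist x x' ≤ dist (Φ x) (Φ x') ∧ dist (Φ x) (Φ x') ≤ b * dist x x' := by
  have key := hdist x (hsA hx) x' (hsA hx')
  obtain ⟨ha, hb⟩ := hsw x hx
  obtain ⟨ha', hb'⟩ := hsw x' hx'
  constructor <;> refine (pow_le_pow_iff_left₀ (by positivity) (by positivity) two_ne_zero).1 ?_
  · rw [key, mul_pow, sq (a : ℝ)]
    gcongr
  · rw [key, mul_pow, sq (b : ℝ)]
    gcongr

end DistSqEq

section HausdorffMeasure

variable {X Y : Type*} [MetricSpace X] [MeasurableSpace X] [BorelSpace X]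
  [MetricSpace Y] [MeasurableSpace Y] [BorelSpace Y] {d : ℝ}

theorem le_hausdorffMeasure_image_of_dist_le_mul {Φ : X → Y} {s : Set X} {K : ℝ≥0} (hd : 0 ≤ d)
    (h : ∀ x ∈ s, ∀ x' ∈ s, dist x x' ≤ K * dist (Φ x) (Φ x')) :
    μH[d] s ≤ (K : ℝ≥0∞) ^ d * μH[d] (Φ '' s) := by
  rcases isEmpty_or_nonempty X with hX | hX
  · simp [Set.eq_empty_of_isEmpty s]
  have hinj : InjOn Φ s := fun x hx x' hx' hΦ =>
    dist_le_zero.1 <| by simpa [hΦ] using h x hx x' hx'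
  have hinv := hinj.leftInvOn_invFunOn
  have hlip : LipschitzOnWith K (invFunOn Φ s) (Φ '' s) := by
    refine LipschitzOnWith.of_dist_le_mul ?_
    rintro _ ⟨x, hx, rfl⟩ _ ⟨x', hx', rfl⟩
    rw [hinv hx, hinv hx']
    exact h x hx x' hx'
  calc μH[d] s = μH[d] (invFunOn Φ s '' (Φ '' s)) := by rw [hinv.image_image]
    _ ≤ (K : ℝ≥0∞) ^ d * μH[d] (Φ '' s) := hlip.hausdorffMeasure_image_le hd

variable {Φ : X → Y} {A : Set X} {w : X → ℝ≥0}

theorem lintegral_rpow_le_and_hausdorffMeasure_image_le_of_mem_Icc (hd : 0 ≤ d)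
    (hw : Measurable w)
    (hdist : ∀ x ∈ A, ∀ x' ∈ A, dist (Φ x) (Φ x') ^ 2 = w x * w x' * dist x x' ^ 2)
    {s : Set X} (hsA : s ⊆ A) {a r : ℝ≥0} (ha : 0 < a) (hsw : ∀ x ∈ s, w x ∈ Icc a (r * a)) :
    ∫⁻ x in s, (w x : ℝ≥0∞) ^ d ∂μH[d] ≤ (r : ℝ≥0∞) ^ d * μH[d] (Φ '' s) ∧
      μH[d] (Φ '' s) ≤ (r : ℝ≥0∞) ^ d * ∫⁻ x in s, (w x : ℝ≥0∞) ^ d ∂μH[d] := by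
  have hbounds := fun x (hx : x ∈ s) x' (hx' : x' ∈ s) =>
    dist_image_bounds_of_dist_sq_eq hdist hsA hsw hx hx'
  have hlower : μH[d] s ≤ ((a⁻¹ : ℝ≥0) : ℝ≥0∞) ^ d * μH[d] (Φ '' s) :=
    le_hausdorffMeasure_image_of_dist_le_mul hd fun x hx x' hx' => by
      rw [NNReal.coe_inv, le_inv_mul_iff₀ (by exact_mod_cast ha)]
      exact (hbounds x hx x' hx').1
  have hupper : μH[d] (Φ '' s) ≤ ((r * a : ℝ≥0) : ℝ≥0∞) ^ d * μH[d] s :=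
    (LipschitzOnWith.of_dist_le_mul fun x hx x' hx' =>
      (hbounds x hx x' hx').2).hausdorffMeasure_image_le hd
  have hint_lower : (a : ℝ≥0∞) ^ d * μH[d] s ≤ ∫⁻ x in s, (w x : ℝ≥0∞) ^ d ∂μH[d] := by
    rw [← setLIntegral_const]
    exact setLIntegral_mono (hw.coe_nnreal_ennreal.pow_const d) fun x hx =>
      ENNReal.rpow_le_rpow (by exact_mod_cast (hsw x hx).1) hd
  have hint_upper :
      ∫⁻ x in s, (w x : ℝ≥0∞) ^ d ∂μH[d] ≤ ((r * a : ℝ≥0) : ℝ≥0∞) ^ d * μH[d] s := by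
    rw [← setLIntegral_const]
    exact setLIntegral_mono measurable_const fun x hx =>
      ENNReal.rpow_le_rpow (by exact_mod_cast (hsw x hx).2) hd
  have hsplit : ((r * a : ℝ≥0) : ℝ≥0∞) ^ d = (r : ℝ≥0∞) ^ d * (a : ℝ≥0∞) ^ d := by
    rw [ENNReal.coe_mul, ENNReal.mul_rpow_of_nonneg _ _ hd]
  have hcancel : (a : ℝ≥0∞) ^ d * ((a⁻¹ : ℝ≥0) : ℝ≥0∞) ^ d = 1 := by
    rw [← ENNReal.mul_rpow_of_nonneg _ _ hd, ← ENNReal.coe_mul, mul_inv_cancel₀ ha.ne',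
      ENNReal.coe_one, ENNReal.one_rpow]
  constructor
  · calc ∫⁻ x in s, (w x : ℝ≥0∞) ^ d ∂μH[d] ≤ (r : ℝ≥0∞) ^ d * (a : ℝ≥0∞) ^ d * μH[d] s :=
          hint_upper.trans_eq (by rw [hsplit])
      _ ≤ (r : ℝ≥0∞) ^ d * (a : ℝ≥0∞) ^ d * (((a⁻¹ : ℝ≥0) : ℝ≥0∞) ^ d * μH[d] (Φ '' s)) := by
          gcongr
      _ = (r : ℝ≥0∞) ^ d * μH[d] (Φ '' s) := by
          rw [mul_assoc, ← mul_assoc ((a : ℝ≥0∞) ^ d), hcancel, one_mul]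
  · calc μH[d] (Φ '' s) ≤ (r : ℝ≥0∞) ^ d * ((a : ℝ≥0∞) ^ d * μH[d] s) :=
          hupper.trans_eq (by rw [hsplit, mul_assoc])
      _ ≤ (r : ℝ≥0∞) ^ d * ∫⁻ x in s, (w x : ℝ≥0∞) ^ d ∂μH[d] := by gcongr

theorem lintegral_rpow_le_and_hausdorffMeasure_image_le [PolishSpace X] (hd : 0 ≤ d)
    (hΦ : Continuous Φ) (hw : Measurable w) (hw_pos : ∀ x ∈ A, 0 < w x)
    (hdist : ∀ x ∈ A, ∀ x' ∈ A, dist (Φ x) (Φ x') ^ 2 = w x * w x' * dist x x' ^ 2)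
    {S : Set X} (hS : MeasurableSet S) (hSA : S ⊆ A) {r : ℝ≥0} (hr : 1 < r) :
    ∫⁻ x in S, (w x : ℝ≥0∞) ^ d ∂μH[d] ≤ (r : ℝ≥0∞) ^ d * μH[d] (Φ '' S) ∧
      μH[d] (Φ '' S) ≤ (r : ℝ≥0∞) ^ d * ∫⁻ x in S, (w x : ℝ≥0∞) ^ d ∂μH[d] := by
  have hinj := (injOn_of_dist_sq_eq hw_pos hdist).mono hSA
  have hr0 : 0 < r := zero_lt_one.trans hr
  set L : ℤ → Set X := fun j => S ∩ w ⁻¹' Ico (r ^ j) (r ^ (j + 1))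
  have hLS : ∀ j, L j ⊆ S := fun j => inter_subset_left
  have hLm : ∀ j, MeasurableSet (L j) := fun j => hS.inter (hw measurableSet_Ico)
  have hIco : Pairwise (Disjoint on fun j : ℤ => Ico (r ^ j) (r ^ (j + 1))) := by
    simpa only [Order.succ_eq_add_one] using
      (zpow_right_mono₀ hr.le).pairwise_disjoint_on_Ico_succ
  have hLdisj : Pairwise (Disjoint on L) := fun i j hij =>
    ((hIco hij).preimage w).mono inter_subset_right inter_subset_right
  have hLunion : ⋃ j, L j = S := by
    refine Subset.antisymm (iUnion_subset hLS) fun x hx => mem_iUnion.2 ?_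
    obtain ⟨j, hj⟩ := NNReal.exists_mem_Ico_zpow (hw_pos x (hSA hx)).ne' hr
    exact ⟨j, hx, hj⟩
  have hint : ∫⁻ x in S, (w x : ℝ≥0∞) ^ d ∂μH[d] =
      ∑' j, ∫⁻ x in L j, (w x : ℝ≥0∞) ^ d ∂μH[d] := by
    conv_lhs => rw [← hLunion]
    exact lintegral_iUnion hLm hLdisj _
  have himg : μH[d] (Φ '' S) = ∑' j, μH[d] (Φ '' L j) := by
    conv_lhs => rw [← hLunion, image_iUnion]
    refine measure_iUnion (fun i j hij => ?_) fun j =>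
      (hLm j).image_of_continuousOn_injOn hΦ.continuousOn (hinj.mono (hLS j))
    rw [onFun, disjoint_iff_inter_eq_empty, ← hinj.image_inter (hLS i) (hLS j),
      (hLdisj hij).inter_eq, image_empty]
  have hlayer := fun j =>
    lintegral_rpow_le_and_hausdorffMeasure_image_le_of_mem_Icc (a := r ^ j) hd hw hdist
      ((hLS j).trans hSA) (zpow_pos hr0 j) fun x hx =>
        ⟨hx.2.1, hx.2.2.le.trans_eq (by rw [zpow_add_one₀ hr0.ne', mul_comm])⟩
  rw [hint, himg, ← ENNReal.tsum_mul_left, ← ENNReal.tsum_mul_left]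
  exact ⟨ENNReal.tsum_le_tsum fun j => (hlayer j).1, ENNReal.tsum_le_tsum fun j => (hlayer j).2⟩

theorem map_withDensity_hausdorffMeasure_eq [PolishSpace X] (hd : 0 ≤ d) (hΦ : Continuous Φ)
    (hA : MeasurableSet A) (hw : Measurable w) (hw_pos : ∀ x ∈ A, 0 < w x)
    (hdist : ∀ x ∈ A, ∀ x' ∈ A, dist (Φ x) (Φ x') ^ 2 = w x * w x' * dist x x' ^ 2) :
    Measure.map Φ ((μH[d].restrict A).withDensity fun x => (w x : ℝ≥0∞) ^ d) =
      μH[d].restrict (Φ '' A) := by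
  ext t ht
  rw [Measure.map_apply hΦ.measurable ht, withDensity_apply _ (hΦ.measurable ht),
    Measure.restrict_restrict (hΦ.measurable ht), Measure.restrict_apply ht,
    ← image_preimage_inter]
  have bounds := fun r (hr : 1 < r) => lintegral_rpow_le_and_hausdorffMeasure_image_le hd hΦ hw
    hw_pos hdist ((hΦ.measurable ht).inter hA) inter_subset_right hr
  exact le_antisymm (ENNReal.le_of_forall_one_lt_rpow_mul_le fun r hr => (bounds r hr).1)
    (ENNReal.le_of_forall_one_lt_rpow_mul_le fun r hr => (bounds r hr).2)

end HausdorffMeasure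

theorem EuclideanSpace.dist_sq_eq_norm_sq_sub_sum_add {ι : Type*} [Fintype ι]
    (x y : EuclideanSpace ℝ ι) : dist x y ^ 2 = ‖x‖ ^ 2 - 2 * ∑ i, x i * y i + ‖y‖ ^ 2 := by
  simp only [EuclideanSpace.dist_sq_eq, EuclideanSpace.real_norm_sq_eq, Real.dist_eq, sq_abs,
    Finset.mul_sum, ← Finset.sum_sub_distrib, ← Finset.sum_add_distrib]
  exact Finset.sum_congr rfl fun i _ => by ring

theorem EuclideanSpace.sum_mul_self {ι : Type*} [Fintype ι] (x : EuclideanSpace ℝ ι) :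
    ∑ i, x i * x i = ‖x‖ ^ 2 := by
  simp only [EuclideanSpace.real_norm_sq_eq, ← sq]

section UnitSphere

variable {n : ℕ} {x : EuclideanSpace ℝ (Fin (n + 1))}

theorem sum_castSucc_sq_of_norm_eq_one (hx : ‖x‖ = 1) :
    ∑ i : Fin n, x i.castSucc ^ 2 = 1 - x (Fin.last n) ^ 2 := by
  have h := EuclideanSpace.real_norm_sq_eq x
  rw [hx, one_pow, Fin.sum_univ_castSucc] at h
  linarith

theorem sum_mul_eq_last_of_last_eq_one (hx : ‖x‖ = 1) (hxl : x (Fin.last n) = 1)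
    (v : EuclideanSpace ℝ (Fin (n + 1))) : ∑ i, x i * v i = v (Fin.last n) := by
  have hsq := sum_castSucc_sq_of_norm_eq_one hx
  rw [hxl, one_pow, sub_self, Finset.sum_eq_zero_iff_of_nonneg fun i _ => sq_nonneg _] at hsq
  have hzero : ∀ i : Fin n, x i.castSucc = 0 := fun i =>
    (pow_eq_zero_iff two_ne_zero).1 (hsq i (Finset.mem_univ i))
  simp [Fin.sum_univ_castSucc, hzero, hxl]

end UnitSphere

noncomputable def stereoProj (n : ℕ) (x : EuclideanSpace ℝ (Fin (n + 1))) :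
    EuclideanSpace ℝ (Fin n) :=
  WithLp.toLp 2 fun i => x i.castSucc / (1 - x (Fin.last n))

noncomputable def stereoInvDilation (n : ℕ) (y : EuclideanSpace ℝ (Fin n)) : ℝ≥0 :=
  ⟨2 / (1 + ‖y‖ ^ 2), by positivity⟩

section Stereographic

variable {n : ℕ}

@[simp]
theorem coe_stereoInvDilation (y : EuclideanSpace ℝ (Fin n)) :
    (stereoInvDilation n y : ℝ) = 2 / (1 + ‖y‖ ^ 2) :=
  rfl

theorem continuous_stereoInvDilation : Continuous (stereoInvDilation n) :=
  Continuous.subtype_mk (by fun_prop (disch := intro; positivity)) _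

theorem stereoInvDilation_pos (y : EuclideanSpace ℝ (Fin n)) : 0 < stereoInvDilation n y := by
  rw [← NNReal.coe_pos, coe_stereoInvDilation]
  positivity

theorem stereoInvDilation_rpow_smul (hn : 1 ≤ n) (y : EuclideanSpace ℝ (Fin n)) (c : ℝ) :
    stereoInvDilation n y ^ ((n : ℝ) - 1) • c = 2 ^ (n - 1) * c / (1 + ‖y‖ ^ 2) ^ (n - 1) := by
  rw [← Nat.cast_pred hn, NNReal.rpow_natCast, NNReal.smul_def, NNReal.coe_pow,
    coe_stereoInvDilation, smul_eq_mul, div_pow]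
  ring

@[simp]
theorem stereoInv_castSucc (y : EuclideanSpace ℝ (Fin n)) (i : Fin n) :
    stereoInv n y i.castSucc = 2 * y i / (1 + ‖y‖ ^ 2) := by
  simp [stereoInv]

@[simp]
theorem stereoInv_last (y : EuclideanSpace ℝ (Fin n)) :
    stereoInv n y (Fin.last n) = (-1 + ‖y‖ ^ 2) / (1 + ‖y‖ ^ 2) := by
  simp [stereoInv]

theorem continuous_stereoInv : Continuous (stereoInv n) := by
  refine (PiLp.continuous_toLp 2 _).comp (continuous_pi fun i => ?_)
  induction i using Fin.lastCases <;>
    simp only [Fin.lastCases_last, Fin.lastCases_castSucc] <;>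
    fun_prop (disch := intro; positivity)

theorem sum_stereoInv_mul (y : EuclideanSpace ℝ (Fin n)) (v : EuclideanSpace ℝ (Fin (n + 1))) :
    ∑ i, stereoInv n y i * v i =
      (2 * ∑ i, y i * v i.castSucc + (‖y‖ ^ 2 - 1) * v (Fin.last n)) / (1 + ‖y‖ ^ 2) := by
  simp only [Fin.sum_univ_castSucc, stereoInv_castSucc, stereoInv_last, add_div, Finset.mul_sum,
    Finset.sum_div]
  congr 1
  · exact Finset.sum_congr rfl fun i _ => by ring
  · ring

theorem sum_mul_stereoInv_castSucc (y : EuclideanSpace ℝ (Fin n)) (v : EuclideanSpace ℝ (Fin n)) :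
    ∑ i, v i * stereoInv n y i.castSucc = 2 * (∑ i, v i * y i) / (1 + ‖y‖ ^ 2) := by
  simp only [stereoInv_castSucc, Finset.mul_sum, Finset.sum_div]
  exact Finset.sum_congr rfl fun i _ => by ring

theorem norm_stereoInv (y : EuclideanSpace ℝ (Fin n)) : ‖stereoInv n y‖ = 1 := by
  refine (pow_eq_one_iff_of_nonneg (norm_nonneg _) two_ne_zero).1 ?_
  rw [← EuclideanSpace.sum_mul_self, sum_stereoInv_mul, sum_mul_stereoInv_castSucc,
    EuclideanSpace.sum_mul_self, stereoInv_last]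
  field_simp
  ring

theorem dist_stereoInv_sq (y y' : EuclideanSpace ℝ (Fin n)) :
    dist (stereoInv n y) (stereoInv n y') ^ 2 =
      stereoInvDilation n y * stereoInvDilation n y' * dist y y' ^ 2 := by
  rw [EuclideanSpace.dist_sq_eq_norm_sq_sub_sum_add, norm_stereoInv, norm_stereoInv,
    sum_stereoInv_mul, sum_mul_stereoInv_castSucc, stereoInv_last,
    EuclideanSpace.dist_sq_eq_norm_sq_sub_sum_add y y']
  simp only [coe_stereoInvDilation]
  field_simp
  ring

theorem one_add_norm_sq_mul_sum_stereoInv_mul_sub {ψ : EuclideanSpace ℝ (Fin (n + 1))}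
    (hψ : ‖ψ‖ = 1) {ρ : ℝ} (hρψ : ρ ≠ ψ (Fin.last n)) (y : EuclideanSpace ℝ (Fin n)) :
    (1 + ‖y‖ ^ 2) * (∑ i, stereoInv n y i * ψ i - ρ) =
      (ψ (Fin.last n) - ρ) *
        (dist y (projCenter n ψ ρ) ^ 2 - (1 - ρ ^ 2) / (ρ - ψ (Fin.last n)) ^ 2) := by
  have hc : ρ - ψ (Fin.last n) ≠ 0 := sub_ne_zero.2 hρψ
  rw [sum_stereoInv_mul, EuclideanSpace.dist_sq_eq_norm_sq_sub_sum_add,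
    EuclideanSpace.real_norm_sq_eq (projCenter n ψ ρ)]
  simp only [projCenter, PiLp.toLp_apply, div_pow, mul_div_assoc', ← Finset.sum_div,
    sum_castSucc_sq_of_norm_eq_one hψ]
  field_simp
  ring

theorem one_add_norm_stereoProj_sq {x : EuclideanSpace ℝ (Fin (n + 1))} (hx : ‖x‖ = 1)
    (hxl : x (Fin.last n) ≠ 1) : 1 + ‖stereoProj n x‖ ^ 2 = 2 / (1 - x (Fin.last n)) := by
  have hc : 1 - x (Fin.last n) ≠ 0 := sub_ne_zero.2 hxl.symm
  rw [EuclideanSpace.real_norm_sq_eq]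
  simp only [stereoProj, PiLp.toLp_apply, div_pow, ← Finset.sum_div,
    sum_castSucc_sq_of_norm_eq_one hx]
  field_simp
  ring

theorem stereoInv_stereoProj {x : EuclideanSpace ℝ (Fin (n + 1))} (hx : ‖x‖ = 1)
    (hxl : x (Fin.last n) ≠ 1) : stereoInv n (stereoProj n x) = x := by
  have hc : 1 - x (Fin.last n) ≠ 0 := sub_ne_zero.2 hxl.symm
  have hN := one_add_norm_stereoProj_sq hx hxl
  ext i
  induction i using Fin.lastCases with
  | last =>
    rw [stereoInv_last, hN, show -1 + ‖stereoProj n x‖ ^ 2 = 2 / (1 - x (Fin.last n)) - 2 by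
      linarith]
    field_simp
    ring
  | cast i =>
    rw [stereoInv_castSucc, hN]
    simp only [stereoProj, PiLp.toLp_apply]
    field_simp

theorem sum_stereoInv_mul_eq_iff {ψ : EuclideanSpace ℝ (Fin (n + 1))} (hψ : ‖ψ‖ = 1) {ρ : ℝ}
    (hρ : ρ ^ 2 ≤ 1) (hρψ : ρ ≠ ψ (Fin.last n)) (y : EuclideanSpace ℝ (Fin n)) :
    ∑ i, stereoInv n y i * ψ i = ρ ↔
      y ∈ Metric.sphere (projCenter n ψ ρ) (√(1 - ρ ^ 2) / |ρ - ψ (Fin.last n)|) := by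
  have hradius :
      (√(1 - ρ ^ 2) / |ρ - ψ (Fin.last n)|) ^ 2 = (1 - ρ ^ 2) / (ρ - ψ (Fin.last n)) ^ 2 := by
    rw [div_pow, Real.sq_sqrt (by linarith), sq_abs]
  rw [Metric.mem_sphere, ← sq_eq_sq₀ dist_nonneg (by positivity), hradius,
    ← sub_eq_zero (a := dist y _ ^ 2), ← mul_eq_zero_iff_left (sub_ne_zero.2 hρψ.symm),
    ← one_add_norm_sq_mul_sum_stereoInv_mul_sub hψ hρψ, mul_eq_zero_iff_left (by positivity),
    sub_eq_zero]

theorem image_stereoInv_sphere_projCenter {ψ : EuclideanSpace ℝ (Fin (n + 1))} (hψ : ‖ψ‖ = 1)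
    {ρ : ℝ} (hρ : ρ ^ 2 ≤ 1) (hρψ : ρ ≠ ψ (Fin.last n)) :
    stereoInv n '' Metric.sphere (projCenter n ψ ρ) (√(1 - ρ ^ 2) / |ρ - ψ (Fin.last n)|) =
      {x | ‖x‖ = 1 ∧ ∑ i, x i * ψ i = ρ} := by
  ext x
  constructor
  · rintro ⟨y, hy, rfl⟩
    exact ⟨norm_stereoInv y, (sum_stereoInv_mul_eq_iff hψ hρ hρψ y).2 hy⟩
  · rintro ⟨hx, hxψ⟩
    have hxl : x (Fin.last n) ≠ 1 := fun h =>
      hρψ (hxψ.symm.trans (sum_mul_eq_last_of_last_eq_one hx h ψ))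
    refine ⟨stereoProj n x, (sum_stereoInv_mul_eq_iff hψ hρ hρψ _).1 ?_,
      stereoInv_stereoProj hx hxl⟩
    rwa [stereoInv_stereoProj hx hxl]

end Stereographic

/-- Relation between the spherical transform of `f` and the spherical mean transform of
`g(y) = 2^{n−1} f(Λ⁻¹(y))/(1 + |y|²)^{n−1}`:
`Sf(ψ, ρ) = Rg(ψ*/(ρ − ψ_{n+1}), √(1 − ρ²)/|ρ − ψ_{n+1}|)`. -/
theorem stmt2 (n : ℕ) (hn : 2 ≤ n) (f : EuclideanSpace ℝ (Fin (n + 1)) → ℝ)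
    (hf : Continuous f) (g : EuclideanSpace ℝ (Fin n) → ℝ)
    (hg : ∀ y, g y = 2 ^ (n - 1) * f (stereoInv n y) / (1 + ‖y‖ ^ 2) ^ (n - 1))
    (ψ : EuclideanSpace ℝ (Fin (n + 1))) (hψ : ‖ψ‖ = 1)
    (ρ : ℝ) (hρ0 : 0 ≤ ρ) (hρ1 : ρ < 1) (hρψ : ρ ≠ ψ (Fin.last n)) :
    sphericalTransform n f ψ ρ =
      sphericalMeanTransform n g (projCenter n ψ ρ)
        (Real.sqrt (1 - ρ ^ 2) / |ρ - ψ (Fin.last n)|) := by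
  have hd : (0 : ℝ) ≤ n - 1 := by
    have : (2 : ℝ) ≤ n := by exact_mod_cast hn
    linarith
  have hmap := map_withDensity_hausdorffMeasure_eq
    (A := Metric.sphere (projCenter n ψ ρ) (√(1 - ρ ^ 2) / |ρ - ψ (Fin.last n)|)) hd
    continuous_stereoInv Metric.isClosed_sphere.measurableSet
    continuous_stereoInvDilation.measurable (fun y _ => stereoInvDilation_pos y)
    fun y _ y' _ => dist_stereoInv_sq y y'
  rw [image_stereoInv_sphere_projCenter hψ (by nlinarith) hρψ] at hmap
  simp_rw [← ENNReal.coe_rpow_of_nonneg _ hd] at hmap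
  rw [sphericalTransform, ← hmap, integral_map continuous_stereoInv.aemeasurable
      hf.aestronglyMeasurable,
    integral_withDensity_eq_integral_smul (continuous_stereoInvDilation.measurable.pow_const _)]
  congr 1 with y
  rw [hg, stereoInvDilation_rpow_smul (by omega)]
end

section
/- Let n ≥ 2, let I be an open interval and let γ = (γ₁, γ₂) : I → ℝ² be twice continuously differentiable with |γ(t)| < 1, D(t) ≠ 0 and γ₁′(t)γ₂″(t) − γ₁″(t)γ₂′(t) ≠ 0 for all t ∈ I. Then γ₁′(t)² + γ₂′(t)² − E(t)² > 0 for all t, the curve δ is continuously differentiable with δ′(t) ≠ 0 for all t ∈ I, and the surface of revolution M = {(δ₁(t)ω, δ₂(t)) : t ∈ I, ω ∈ S^{n−1}} ⊂ ℝ^n × ℝ is space like: for every t ∈ I, ω ∈ S^{n−1}, a ∈ ℝ and w ∈ ℝ^n with w·ω = 0, the tangent vector v = (a δ₁′(t) ω + δ₁(t) w, a δ₂′(t)) ∈ ℝ^{n+1} of M satisfies v_{n+1}² ≤ v₁² + ⋯ + v_n². -/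
/-!
Write `W = γ₁′γ₂″ − γ₁″γ₂′`. Regularity forces `γ′ ≠ 0`, so Lagrange's identity
`(xq − yp)² + (xp + yq)² = (x² + y²)(p² + q²)` together with `|γ| < 1` makes the radicand
`F = |γ′|² − E²` positive. Hence `δ₂ = √(F / D²)` is `C¹`, and differentiating gives
`δ₁′ = (1 − γ₂) W / D² ≠ 0` together with the polynomial identity
`δ₁′² − δ₂′² = (1 − |γ|²) W² / (F D²) ≥ 0`. Since `w ⊥ ω`, the horizontal part of a tangent
vector has squared norm at least `(a δ₁′)² ≥ (a δ₂′)²`, which is space-likeness.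
-/

/-- `D(t) = γ₁(t)γ₂′(t) − γ₂(t)γ₁′(t) + γ₁′(t)`: nonvanishing means the tangent line to `γ`
at `t` does not pass through the north pole `(0,1)`. -/
noncomputable def Dfn (γ₁ γ₂ : ℝ → ℝ) (t : ℝ) : ℝ :=
  γ₁ t * deriv γ₂ t - γ₂ t * deriv γ₁ t + deriv γ₁ t

/-- `E(t) = γ₁(t)γ₂′(t) − γ₂(t)γ₁′(t)`. -/
noncomputable def Efn (γ₁ γ₂ : ℝ → ℝ) (t : ℝ) : ℝ :=
  γ₁ t * deriv γ₂ t - γ₂ t * deriv γ₁ t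

/-- First component `δ₁(t) = γ₂′(t)/D(t)` of the image curve (the center coordinate). -/
noncomputable def delta1 (γ₁ γ₂ : ℝ → ℝ) (t : ℝ) : ℝ :=
  deriv γ₂ t / Dfn γ₁ γ₂ t

/-- Second component `δ₂(t) = √(γ₁′(t)² + γ₂′(t)² − E(t)²)/|D(t)|` (the radius coordinate). -/
noncomputable def delta2 (γ₁ γ₂ : ℝ → ℝ) (t : ℝ) : ℝ :=
  Real.sqrt ((deriv γ₁ t) ^ 2 + (deriv γ₂ t) ^ 2 - Efn γ₁ γ₂ t ^ 2) / |Dfn γ₁ γ₂ t|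

/-- The radicand of `delta2`. -/
noncomputable def Ffn (γ₁ γ₂ : ℝ → ℝ) (t : ℝ) : ℝ :=
  deriv γ₁ t ^ 2 + deriv γ₂ t ^ 2 - Efn γ₁ γ₂ t ^ 2

theorem sq_cross_lt_sq_add_sq {x y p q : ℝ} (hxy : x ^ 2 + y ^ 2 < 1) (hpq : 0 < p ^ 2 + q ^ 2) :
    (x * q - y * p) ^ 2 < p ^ 2 + q ^ 2 := by
  have lagrange :
      (x * q - y * p) ^ 2 + (x * p + y * q) ^ 2 = (x ^ 2 + y ^ 2) * (p ^ 2 + q ^ 2) := by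
    ring
  nlinarith [sq_nonneg (x * p + y * q)]

theorem sq_mul_le_norm_smul_add_sq {E : Type*} [NormedAddCommGroup E] [InnerProductSpace ℝ E]
    {ω w : E} (hω : ‖ω‖ = 1) (hw : inner ℝ w ω = (0 : ℝ)) {c d : ℝ} (hcd : c ^ 2 ≤ d ^ 2)
    (a e : ℝ) : (a * c) ^ 2 ≤ ‖(a * d) • ω + e • w‖ ^ 2 := by
  have horth : inner ℝ ((a * d) • ω) (e • w) = (0 : ℝ) := by
    rw [real_inner_smul_left, real_inner_smul_right, real_inner_comm, hw, mul_zero, mul_zero]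
  rw [norm_add_sq_real, horth, norm_smul, hω, Real.norm_eq_abs, mul_one, sq_abs]
  nlinarith [mul_le_mul_of_nonneg_left hcd (sq_nonneg a), sq_nonneg ‖e • w‖]

theorem ContDiffAt.hasDerivAt_deriv {f : ℝ → ℝ} {t : ℝ} (h : ContDiffAt ℝ 2 f t) :
    HasDerivAt (deriv f) (deriv (deriv f) t) t :=
  ((h.derivWithin (m := 1) le_rfl).differentiableAt one_ne_zero).hasDerivAt

section

variable {γ₁ γ₂ : ℝ → ℝ} {t : ℝ}

theorem delta2_eq_sqrt : delta2 γ₁ γ₂ = fun t => √(Ffn γ₁ γ₂ t / Dfn γ₁ γ₂ t ^ 2) := by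
  ext t
  rw [Real.sqrt_div' _ (sq_nonneg _), Real.sqrt_sq_eq_abs]
  rfl

theorem Ffn_pos (hin : γ₁ t ^ 2 + γ₂ t ^ 2 < 1)
    (hreg : deriv γ₁ t * deriv (deriv γ₂) t - deriv (deriv γ₁) t * deriv γ₂ t ≠ 0) :
    0 < Ffn γ₁ γ₂ t := by
  have hpq : 0 < deriv γ₁ t ^ 2 + deriv γ₂ t ^ 2 := by
    refine lt_of_le_of_ne (by positivity) fun h => hreg ?_
    obtain ⟨hp, hq⟩ := (add_eq_zero_iff_of_nonneg (sq_nonneg _) (sq_nonneg _)).1 h.symm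
    rw [pow_eq_zero_iff two_ne_zero] at hp hq
    rw [hp, hq]
    ring
  exact sub_pos.2 (sq_cross_lt_sq_add_sq hin hpq)

theorem hasDerivAt_Efn (h₁ : ContDiffAt ℝ 2 γ₁ t) (h₂ : ContDiffAt ℝ 2 γ₂ t) :
    HasDerivAt (Efn γ₁ γ₂) (γ₁ t * deriv (deriv γ₂) t - γ₂ t * deriv (deriv γ₁) t) t :=
  have hγ₁ := (h₁.hasStrictDerivAt two_ne_zero).hasDerivAt
  have hγ₂ := (h₂.hasStrictDerivAt two_ne_zero).hasDerivAt
  ((hγ₁.fun_mul h₂.hasDerivAt_deriv).fun_sub (hγ₂.fun_mul h₁.hasDerivAt_deriv)).congr_deriv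
    (by ring)

theorem hasDerivAt_Dfn (h₁ : ContDiffAt ℝ 2 γ₁ t) (h₂ : ContDiffAt ℝ 2 γ₂ t) :
    HasDerivAt (Dfn γ₁ γ₂)
      (γ₁ t * deriv (deriv γ₂) t - γ₂ t * deriv (deriv γ₁) t + deriv (deriv γ₁) t) t :=
  (hasDerivAt_Efn h₁ h₂).fun_add h₁.hasDerivAt_deriv

theorem hasDerivAt_Ffn (h₁ : ContDiffAt ℝ 2 γ₁ t) (h₂ : ContDiffAt ℝ 2 γ₂ t) :
    HasDerivAt (Ffn γ₁ γ₂)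
      (2 * deriv γ₁ t * deriv (deriv γ₁) t + 2 * deriv γ₂ t * deriv (deriv γ₂) t
        - 2 * Efn γ₁ γ₂ t * (γ₁ t * deriv (deriv γ₂) t - γ₂ t * deriv (deriv γ₁) t)) t :=
  (((h₁.hasDerivAt_deriv.fun_pow 2).fun_add (h₂.hasDerivAt_deriv.fun_pow 2)).fun_sub
    ((hasDerivAt_Efn h₁ h₂).fun_pow 2)).congr_deriv (by push_cast; ring)

theorem hasDerivAt_delta1 (h₁ : ContDiffAt ℝ 2 γ₁ t) (h₂ : ContDiffAt ℝ 2 γ₂ t)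
    (hD : Dfn γ₁ γ₂ t ≠ 0) :
    HasDerivAt (delta1 γ₁ γ₂)
      ((1 - γ₂ t) * (deriv γ₁ t * deriv (deriv γ₂) t - deriv (deriv γ₁) t * deriv γ₂ t)
        / Dfn γ₁ γ₂ t ^ 2) t :=
  (h₂.hasDerivAt_deriv.fun_div (hasDerivAt_Dfn h₁ h₂) hD).congr_deriv (by rw [Dfn]; ring)

theorem hasDerivAt_delta2 (h₁ : ContDiffAt ℝ 2 γ₁ t) (h₂ : ContDiffAt ℝ 2 γ₂ t)
    (hD : Dfn γ₁ γ₂ t ≠ 0) (hF : 0 < Ffn γ₁ γ₂ t) :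
    HasDerivAt (delta2 γ₁ γ₂)
      (((2 * deriv γ₁ t * deriv (deriv γ₁) t + 2 * deriv γ₂ t * deriv (deriv γ₂) t
        - 2 * Efn γ₁ γ₂ t * (γ₁ t * deriv (deriv γ₂) t - γ₂ t * deriv (deriv γ₁) t))
          * Dfn γ₁ γ₂ t
        - 2 * Ffn γ₁ γ₂ t
          * (γ₁ t * deriv (deriv γ₂) t - γ₂ t * deriv (deriv γ₁) t + deriv (deriv γ₁) t))
        / Dfn γ₁ γ₂ t ^ 3 / (2 * delta2 γ₁ γ₂ t)) t := by
  rw [delta2_eq_sqrt]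
  refine (((hasDerivAt_Ffn h₁ h₂).fun_div ((hasDerivAt_Dfn h₁ h₂).fun_pow 2)
    (pow_ne_zero 2 hD)).sqrt (div_ne_zero hF.ne' (pow_ne_zero 2 hD))).congr_deriv ?_
  push_cast
  field_simp

theorem delta2_sq (hF : 0 ≤ Ffn γ₁ γ₂ t) :
    delta2 γ₁ γ₂ t ^ 2 = Ffn γ₁ γ₂ t / Dfn γ₁ γ₂ t ^ 2 := by
  rw [delta2_eq_sqrt, Real.sq_sqrt (div_nonneg hF (sq_nonneg _))]

theorem deriv_delta1_sq_sub_deriv_delta2_sq (h₁ : ContDiffAt ℝ 2 γ₁ t)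
    (h₂ : ContDiffAt ℝ 2 γ₂ t) (hD : Dfn γ₁ γ₂ t ≠ 0) (hF : 0 < Ffn γ₁ γ₂ t) :
    deriv (delta1 γ₁ γ₂) t ^ 2 - deriv (delta2 γ₁ γ₂) t ^ 2 =
      (1 - γ₁ t ^ 2 - γ₂ t ^ 2)
        * (deriv γ₁ t * deriv (deriv γ₂) t - deriv (deriv γ₁) t * deriv γ₂ t) ^ 2
        / (Ffn γ₁ γ₂ t * Dfn γ₁ γ₂ t ^ 2) := by
  rw [(hasDerivAt_delta1 h₁ h₂ hD).deriv, (hasDerivAt_delta2 h₁ h₂ hD hF).deriv]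
  simp only [div_pow, mul_pow, delta2_sq hF.le]
  field_simp
  simp only [Ffn, Dfn, Efn]
  ring

theorem sq_deriv_delta2_le (h₁ : ContDiffAt ℝ 2 γ₁ t) (h₂ : ContDiffAt ℝ 2 γ₂ t)
    (hin : γ₁ t ^ 2 + γ₂ t ^ 2 < 1) (hD : Dfn γ₁ γ₂ t ≠ 0) (hF : 0 < Ffn γ₁ γ₂ t) :
    deriv (delta2 γ₁ γ₂) t ^ 2 ≤ deriv (delta1 γ₁ γ₂) t ^ 2 := by
  rw [← sub_nonneg, deriv_delta1_sq_sub_deriv_delta2_sq h₁ h₂ hD hF]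
  exact div_nonneg (mul_nonneg (by linarith) (sq_nonneg _)) (by positivity)

theorem deriv_delta1_ne_zero (h₁ : ContDiffAt ℝ 2 γ₁ t) (h₂ : ContDiffAt ℝ 2 γ₂ t)
    (hin : γ₁ t ^ 2 + γ₂ t ^ 2 < 1) (hD : Dfn γ₁ γ₂ t ≠ 0)
    (hreg : deriv γ₁ t * deriv (deriv γ₂) t - deriv (deriv γ₁) t * deriv γ₂ t ≠ 0) :
    deriv (delta1 γ₁ γ₂) t ≠ 0 := by
  have hy : γ₂ t < 1 := by nlinarith [sq_nonneg (γ₁ t)]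
  rw [(hasDerivAt_delta1 h₁ h₂ hD).deriv]
  exact div_ne_zero (mul_ne_zero (sub_pos.2 hy).ne' hreg) (pow_ne_zero 2 hD)

theorem contDiffAt_Efn (h₁ : ContDiffAt ℝ 2 γ₁ t) (h₂ : ContDiffAt ℝ 2 γ₂ t) :
    ContDiffAt ℝ 1 (Efn γ₁ γ₂) t :=
  ((h₁.of_le one_le_two).mul (h₂.derivWithin le_rfl)).sub
    ((h₂.of_le one_le_two).mul (h₁.derivWithin le_rfl))

theorem contDiffAt_Dfn (h₁ : ContDiffAt ℝ 2 γ₁ t) (h₂ : ContDiffAt ℝ 2 γ₂ t) :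
    ContDiffAt ℝ 1 (Dfn γ₁ γ₂) t :=
  (contDiffAt_Efn h₁ h₂).add (h₁.derivWithin le_rfl)

theorem contDiffAt_Ffn (h₁ : ContDiffAt ℝ 2 γ₁ t) (h₂ : ContDiffAt ℝ 2 γ₂ t) :
    ContDiffAt ℝ 1 (Ffn γ₁ γ₂) t :=
  (((h₁.derivWithin le_rfl).pow 2).add ((h₂.derivWithin le_rfl).pow 2)).sub
    ((contDiffAt_Efn h₁ h₂).pow 2)

theorem contDiffAt_delta1 (h₁ : ContDiffAt ℝ 2 γ₁ t) (h₂ : ContDiffAt ℝ 2 γ₂ t)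
    (hD : Dfn γ₁ γ₂ t ≠ 0) : ContDiffAt ℝ 1 (delta1 γ₁ γ₂) t :=
  (h₂.derivWithin le_rfl).div (contDiffAt_Dfn h₁ h₂) hD

theorem contDiffAt_delta2 (h₁ : ContDiffAt ℝ 2 γ₁ t) (h₂ : ContDiffAt ℝ 2 γ₂ t)
    (hD : Dfn γ₁ γ₂ t ≠ 0) (hF : 0 < Ffn γ₁ γ₂ t) : ContDiffAt ℝ 1 (delta2 γ₁ γ₂) t := by
  rw [delta2_eq_sqrt]
  exact ((contDiffAt_Ffn h₁ h₂).div ((contDiffAt_Dfn h₁ h₂).pow 2) (pow_ne_zero 2 hD)).sqrt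
    (div_ne_zero hF.ne' (pow_ne_zero 2 hD))

end

theorem stmt4_general (n : ℕ) (a b : ℝ) (γ₁ γ₂ : ℝ → ℝ)
    (hγ₁ : ContDiffOn ℝ 2 γ₁ (Set.Ioo a b)) (hγ₂ : ContDiffOn ℝ 2 γ₂ (Set.Ioo a b))
    (hin : ∀ t ∈ Set.Ioo a b, (γ₁ t) ^ 2 + (γ₂ t) ^ 2 < 1)
    (hD : ∀ t ∈ Set.Ioo a b, Dfn γ₁ γ₂ t ≠ 0)
    (hreg : ∀ t ∈ Set.Ioo a b,
      deriv γ₁ t * deriv (deriv γ₂) t - deriv (deriv γ₁) t * deriv γ₂ t ≠ 0) :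
    (∀ t ∈ Set.Ioo a b, 0 < (deriv γ₁ t) ^ 2 + (deriv γ₂ t) ^ 2 - Efn γ₁ γ₂ t ^ 2) ∧
    ContDiffOn ℝ 1 (delta1 γ₁ γ₂) (Set.Ioo a b) ∧
    ContDiffOn ℝ 1 (delta2 γ₁ γ₂) (Set.Ioo a b) ∧
    (∀ t ∈ Set.Ioo a b,
      (deriv (delta1 γ₁ γ₂) t, deriv (delta2 γ₁ γ₂) t) ≠ (0, 0)) ∧
    ∀ t ∈ Set.Ioo a b, ∀ ω : EuclideanSpace ℝ (Fin n), ‖ω‖ = 1 →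
      ∀ a' : ℝ, ∀ w : EuclideanSpace ℝ (Fin n), inner ℝ w ω = (0 : ℝ) →
        (a' * deriv (delta2 γ₁ γ₂) t) ^ 2 ≤
          ‖(a' * deriv (delta1 γ₁ γ₂) t) • ω + delta1 γ₁ γ₂ t • w‖ ^ 2 := by
  have hC₁ : ∀ t ∈ Set.Ioo a b, ContDiffAt ℝ 2 γ₁ t := fun t ht =>
    hγ₁.contDiffAt (isOpen_Ioo.mem_nhds ht)
  have hC₂ : ∀ t ∈ Set.Ioo a b, ContDiffAt ℝ 2 γ₂ t := fun t ht =>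
    hγ₂.contDiffAt (isOpen_Ioo.mem_nhds ht)
  have hF : ∀ t ∈ Set.Ioo a b, 0 < Ffn γ₁ γ₂ t := fun t ht => Ffn_pos (hin t ht) (hreg t ht)
  refine ⟨hF, fun t ht => ?_, fun t ht => ?_, fun t ht h => ?_, ?_⟩
  · exact (contDiffAt_delta1 (hC₁ t ht) (hC₂ t ht) (hD t ht)).contDiffWithinAt
  · exact (contDiffAt_delta2 (hC₁ t ht) (hC₂ t ht) (hD t ht) (hF t ht)).contDiffWithinAt
  · exact deriv_delta1_ne_zero (hC₁ t ht) (hC₂ t ht) (hin t ht) (hD t ht) (hreg t ht)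
      (congrArg Prod.fst h)
  · intro t ht ω hω a' w hw
    exact sq_mul_le_norm_smul_add_sq hω hw
      (sq_deriv_delta2_le (hC₁ t ht) (hC₂ t ht) (hin t ht) (hD t ht) (hF t ht)) a' _

/-- For a regular `C²` curve `γ` inside the unit circle whose tangent lines avoid the north
pole, the curve `δ = (δ₁, δ₂)` is `C¹` with nonvanishing derivative, and the surface of
revolution `M = {(δ₁(t)ω, δ₂(t)) : t ∈ I, ω ∈ S^{n−1}} ⊂ ℝⁿ × ℝ` is space like: every tangent
vector `v = (a δ₁′(t) ω + δ₁(t) w, a δ₂′(t))` (with `w ⊥ ω`) satisfies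
`v_{n+1}² ≤ v₁² + ⋯ + v_n²`. -/
theorem stmt4 (n : ℕ) (hn : 2 ≤ n) (a b : ℝ) (γ₁ γ₂ : ℝ → ℝ)
    (hγ₁ : ContDiffOn ℝ 2 γ₁ (Set.Ioo a b)) (hγ₂ : ContDiffOn ℝ 2 γ₂ (Set.Ioo a b))
    (hin : ∀ t ∈ Set.Ioo a b, (γ₁ t) ^ 2 + (γ₂ t) ^ 2 < 1)
    (hD : ∀ t ∈ Set.Ioo a b, Dfn γ₁ γ₂ t ≠ 0)
    (hreg : ∀ t ∈ Set.Ioo a b,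
      deriv γ₁ t * deriv (deriv γ₂) t - deriv (deriv γ₁) t * deriv γ₂ t ≠ 0) :
    (∀ t ∈ Set.Ioo a b, 0 < (deriv γ₁ t) ^ 2 + (deriv γ₂ t) ^ 2 - Efn γ₁ γ₂ t ^ 2) ∧
    ContDiffOn ℝ 1 (delta1 γ₁ γ₂) (Set.Ioo a b) ∧
    ContDiffOn ℝ 1 (delta2 γ₁ γ₂) (Set.Ioo a b) ∧
    (∀ t ∈ Set.Ioo a b,
      (deriv (delta1 γ₁ γ₂) t, deriv (delta2 γ₁ γ₂) t) ≠ (0, 0)) ∧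
    ∀ t ∈ Set.Ioo a b, ∀ ω : EuclideanSpace ℝ (Fin n), ‖ω‖ = 1 →
      ∀ a' : ℝ, ∀ w : EuclideanSpace ℝ (Fin n), inner ℝ w ω = (0 : ℝ) →
        (a' * deriv (delta2 γ₁ γ₂) t) ^ 2 ≤
          ‖(a' * deriv (delta1 γ₁ γ₂) t) • ω + delta1 γ₁ γ₂ t • w‖ ^ 2 :=
  stmt4_general n a b γ₁ γ₂ hγ₁ hγ₂ hin hD hreg
end

section
/- Let I be an open interval and let γ = (γ₁, γ₂) : I → ℝ² be continuously differentiable with |γ(t)| < 1, γ′(t) ≠ 0 and D(t) ≠ 0 for all t ∈ I. Fix t ∈ I and let L = {γ(t) + s·γ′(t) : s ∈ ℝ} be the tangent line at γ(t). Then γ₁′(t)² + γ₂′(t)² − E(t)² > 0, L does not contain (0, 1), L meets the unit circle S¹ ⊂ ℝ² in exactly two points, and the image of these two points under the stereographic projection λ(x) = x₁/(1 − x₂) is the two-element set { δ₁(t) − δ₂(t) , δ₁(t) + δ₂(t) }. -/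
/-- The tangent line to `γ` at `t`. -/
noncomputable def tangentLine (γ₁ γ₂ : ℝ → ℝ) (t : ℝ) : Set (ℝ × ℝ) :=
  {p | ∃ s : ℝ, p = (γ₁ t + s * deriv γ₁ t, γ₂ t + s * deriv γ₂ t)}

/-!
Write `γ(t) = (x, y)` and `γ′(t) = (u, v)`. The point `γ(t) + s γ′(t)` lies on the unit circle iff
`(u² + v²) s² + 2 (x u + y v) s + x² + y² − 1 = 0`, whose reduced discriminant is
`u² + v² − E²` by Lagrange's identity `(x² + y²)(u² + v²) = (x u + y v)² + E²`; it is positive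
because `x² + y² < 1`. For the two roots `s = (−(x u + y v) ± R) / (u² + v²)`, with
`R = √(u² + v² − E²)`, the stereographic projection of the intersection point is `(v ± R) / D`.
-/

/-- The intersection parameters of the line `(x, y) + s (u, v)` with the unit circle, for
`σ = ±1` and `R² = u² + v² − (x v − y u)²`. -/
noncomputable def chordParam (x y u v R σ : ℝ) : ℝ :=
  (-(x * u + y * v) + σ * R) / (u ^ 2 + v ^ 2)

noncomputable def chordPoint (x y u v R σ : ℝ) : ℝ × ℝ :=
  (x + chordParam x y u v R σ * u, y + chordParam x y u v R σ * v)

section UnitCircleChord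

variable {x y u v R : ℝ}

theorem cross_sq_lt_of_sq_add_sq_lt_one (hxy : x ^ 2 + y ^ 2 < 1) (huv : 0 < u ^ 2 + v ^ 2) :
    (x * v - y * u) ^ 2 < u ^ 2 + v ^ 2 := by
  have lagrange :
      (x ^ 2 + y ^ 2) * (u ^ 2 + v ^ 2) = (x * u + y * v) ^ 2 + (x * v - y * u) ^ 2 := by ring
  nlinarith [sq_nonneg (x * u + y * v)]

theorem north_pole_not_mem_line (hD : x * v - y * u + u ≠ 0) :
    ((0 : ℝ), (1 : ℝ)) ∉ {p : ℝ × ℝ | ∃ s : ℝ, p = (x + s * u, y + s * v)} := by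
  rintro ⟨s, hs⟩
  obtain ⟨h₁, h₂⟩ := Prod.ext_iff.mp hs
  exact hD (by linear_combination -v * h₁ + u * h₂)

theorem line_sq_add_sq_sub_one_eq_mul (huv : u ^ 2 + v ^ 2 ≠ 0)
    (hR : R ^ 2 = u ^ 2 + v ^ 2 - (x * v - y * u) ^ 2) (s : ℝ) :
    (x + s * u) ^ 2 + (y + s * v) ^ 2 - 1 =
      (u ^ 2 + v ^ 2) * (s - chordParam x y u v R (-1)) * (s - chordParam x y u v R 1) := by
  unfold chordParam
  field_simp
  linear_combination hR

theorem chordPoint_mem_unitCircle (huv : u ^ 2 + v ^ 2 ≠ 0)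
    (hR : R ^ 2 = u ^ 2 + v ^ 2 - (x * v - y * u) ^ 2) {σ : ℝ} (hσ : σ ^ 2 = 1) :
    (chordPoint x y u v R σ).1 ^ 2 + (chordPoint x y u v R σ).2 ^ 2 = 1 := by
  simp only [chordPoint, chordParam]
  field_simp
  linear_combination (u ^ 2 + v ^ 2) * (R ^ 2 * hσ + hR)

theorem line_inter_unitCircle (huv : u ^ 2 + v ^ 2 ≠ 0)
    (hR : R ^ 2 = u ^ 2 + v ^ 2 - (x * v - y * u) ^ 2) :
    {p : ℝ × ℝ | ∃ s : ℝ, p = (x + s * u, y + s * v)} ∩ {p : ℝ × ℝ | p.1 ^ 2 + p.2 ^ 2 = 1} =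
      {chordPoint x y u v R (-1), chordPoint x y u v R 1} := by
  ext p
  simp only [Set.mem_inter_iff, Set.mem_ofPred_eq, Set.mem_insert_iff, Set.mem_singleton_iff]
  constructor
  · rintro ⟨⟨s, rfl⟩, hp⟩
    have hroot : (u ^ 2 + v ^ 2) * (s - chordParam x y u v R (-1)) *
        (s - chordParam x y u v R 1) = 0 := by
      rw [← line_sq_add_sq_sub_one_eq_mul huv hR s]; linarith
    rcases mul_eq_zero.mp hroot with hroot | hroot
    · rcases mul_eq_zero.mp hroot with hroot | hroot
      · exact absurd hroot huv
      · left; rw [chordPoint, sub_eq_zero.mp hroot]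
    · right; rw [chordPoint, sub_eq_zero.mp hroot]
  · rintro (rfl | rfl) <;> exact ⟨⟨_, rfl⟩, chordPoint_mem_unitCircle huv hR (by norm_num)⟩

theorem chordPoint_ne (huv : u ^ 2 + v ^ 2 ≠ 0) (hR : R ≠ 0) :
    chordPoint x y u v R (-1) ≠ chordPoint x y u v R 1 := by
  intro h
  obtain ⟨h₁, h₂⟩ := Prod.ext_iff.mp h
  simp only [chordPoint] at h₁ h₂
  have hgap : chordParam x y u v R 1 - chordParam x y u v R (-1) ≠ 0 := by
    rw [show chordParam x y u v R 1 - chordParam x y u v R (-1) = 2 * R / (u ^ 2 + v ^ 2) by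
      unfold chordParam; ring]
    exact div_ne_zero (mul_ne_zero two_ne_zero hR) huv
  have hu : u = 0 := (mul_eq_zero.mp (by linear_combination -h₁ : _ * u = 0)).resolve_left hgap
  have hv : v = 0 := (mul_eq_zero.mp (by linear_combination -h₂ : _ * v = 0)).resolve_left hgap
  exact huv (by simp [hu, hv])

theorem stereographic_chordPoint (hD : x * v - y * u + u ≠ 0) (huv : u ^ 2 + v ^ 2 ≠ 0)
    (hR : R ^ 2 = u ^ 2 + v ^ 2 - (x * v - y * u) ^ 2) {σ : ℝ} (hσ : σ ^ 2 = 1) :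
    (chordPoint x y u v R σ).1 / (1 - (chordPoint x y u v R σ).2) =
      (v + σ * R) / (x * v - y * u + u) := by
  set p := chordPoint x y u v R σ with hp
  have hcross : p.1 * (x * v - y * u + u) = (v + σ * R) * (1 - p.2) := by
    simp only [hp, chordPoint, chordParam]
    field_simp
    linear_combination v * R ^ 2 * hσ + v * hR
  have hpole : 1 - p.2 ≠ 0 := by
    intro h
    refine north_pole_not_mem_line hD ⟨chordParam x y u v R σ, ?_⟩
    have h₁ : p.1 = 0 := by
      rw [h, mul_zero] at hcross; exact (mul_eq_zero.mp hcross).resolve_right hD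
    rw [← h₁, show (1 : ℝ) = p.2 by linarith]
    rfl
  exact (div_eq_div_iff hpole hD).mpr hcross

end UnitCircleChord

theorem pair_div_eq_pair_div_abs {v R D : ℝ} (hD : D ≠ 0) :
    ({(v + -1 * R) / D, (v + 1 * R) / D} : Set ℝ) = {v / D - R / |D|, v / D + R / |D|} := by
  rcases hD.lt_or_gt with hneg | hpos
  · rw [abs_of_neg hneg, Set.pair_comm]
    congr 2 <;> ring
  · rw [abs_of_pos hpos]
    congr 2 <;> ring

theorem stmt12_general (a b : ℝ) (γ₁ γ₂ : ℝ → ℝ)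
    (hin : ∀ s ∈ Set.Ioo a b, (γ₁ s) ^ 2 + (γ₂ s) ^ 2 < 1)
    (hvel : ∀ s ∈ Set.Ioo a b, (deriv γ₁ s, deriv γ₂ s) ≠ (0, 0))
    (hD : ∀ s ∈ Set.Ioo a b, Dfn γ₁ γ₂ s ≠ 0)
    (t : ℝ) (ht : t ∈ Set.Ioo a b) :
    0 < (deriv γ₁ t) ^ 2 + (deriv γ₂ t) ^ 2 - Efn γ₁ γ₂ t ^ 2 ∧
    ((0 : ℝ), (1 : ℝ)) ∉ tangentLine γ₁ γ₂ t ∧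
    (tangentLine γ₁ γ₂ t ∩ {p : ℝ × ℝ | p.1 ^ 2 + p.2 ^ 2 = 1}).ncard = 2 ∧
    (fun p : ℝ × ℝ => p.1 / (1 - p.2)) ''
        (tangentLine γ₁ γ₂ t ∩ {p : ℝ × ℝ | p.1 ^ 2 + p.2 ^ 2 = 1}) =
      {delta1 γ₁ γ₂ t - delta2 γ₁ γ₂ t, delta1 γ₁ γ₂ t + delta2 γ₁ γ₂ t} := by
  have hDt := hD t ht
  simp only [Dfn] at hDt
  simp only [tangentLine, Efn, delta1, delta2, Dfn]
  have huv : 0 < deriv γ₁ t ^ 2 + deriv γ₂ t ^ 2 := by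
    have hne : deriv γ₁ t ≠ 0 ∨ deriv γ₂ t ≠ 0 := by
      by_contra! h
      exact hvel t ht (by rw [h.1, h.2])
    rcases hne with h | h <;> positivity
  have hdisc := sub_pos.mpr (cross_sq_lt_of_sq_add_sq_lt_one (hin t ht) huv)
  have hR := Real.sq_sqrt hdisc.le
  refine ⟨hdisc, north_pole_not_mem_line hDt, ?_, ?_⟩
  · rw [line_inter_unitCircle huv.ne' hR]
    exact Set.ncard_pair (chordPoint_ne huv.ne' (Real.sqrt_pos.mpr hdisc).ne')
  · rw [line_inter_unitCircle huv.ne' hR, Set.image_pair,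
      stereographic_chordPoint hDt huv.ne' hR (by norm_num),
      stereographic_chordPoint hDt huv.ne' hR (by norm_num), pair_div_eq_pair_div_abs hDt]

/-- For a `C¹` curve inside the unit circle with `γ′ ≠ 0` and `D ≠ 0`, the tangent line at `t`
misses the north pole `(0,1)`, meets the unit circle in exactly two points, and the
stereographic projection `λ(x) = x₁/(1 − x₂)` maps these two points to
`{δ₁(t) − δ₂(t), δ₁(t) + δ₂(t)}`. -/
theorem stmt12 (a b : ℝ) (γ₁ γ₂ : ℝ → ℝ)
    (hγ₁ : ContDiffOn ℝ 1 γ₁ (Set.Ioo a b)) (hγ₂ : ContDiffOn ℝ 1 γ₂ (Set.Ioo a b))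
    (hin : ∀ s ∈ Set.Ioo a b, (γ₁ s) ^ 2 + (γ₂ s) ^ 2 < 1)
    (hvel : ∀ s ∈ Set.Ioo a b, (deriv γ₁ s, deriv γ₂ s) ≠ (0, 0))
    (hD : ∀ s ∈ Set.Ioo a b, Dfn γ₁ γ₂ s ≠ 0)
    (t : ℝ) (ht : t ∈ Set.Ioo a b) :
    0 < (deriv γ₁ t) ^ 2 + (deriv γ₂ t) ^ 2 - Efn γ₁ γ₂ t ^ 2 ∧
    ((0 : ℝ), (1 : ℝ)) ∉ tangentLine γ₁ γ₂ t ∧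
    (tangentLine γ₁ γ₂ t ∩ {p : ℝ × ℝ | p.1 ^ 2 + p.2 ^ 2 = 1}).ncard = 2 ∧
    (fun p : ℝ × ℝ => p.1 / (1 - p.2)) ''
        (tangentLine γ₁ γ₂ t ∩ {p : ℝ × ℝ | p.1 ^ 2 + p.2 ^ 2 = 1}) =
      {delta1 γ₁ γ₂ t - delta2 γ₁ γ₂ t, delta1 γ₁ γ₂ t + delta2 γ₁ γ₂ t} :=
  stmt12_general a b γ₁ γ₂ hin hvel hD t ht
end

section
/- Let I be an interval, let γ = (γ₁, γ₂) : I → ℝ² be twice continuously differentiable, and let t₀ ∈ I satisfy γ′(t₀) ≠ 0 and γ₁′(t₀)γ₂″(t₀) − γ₁″(t₀)γ₂′(t₀) ≠ 0. Then there exists ε > 0 such that for all t, t′ ∈ (t₀ − ε, t₀ + ε) ∩ I with t ≠ t′, the tangent vectors γ′(t) and γ′(t′) are not parallel, i.e. γ₁′(t)γ₂′(t′) − γ₂′(t)γ₁′(t′) ≠ 0. In particular, near a point where the regularity condition holds, no two distinct points of the curve have parallel tangent lines (the curve is locally convex there). -/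
/-!
Write `u = γ₁′`, `v = γ₂′`. If `u t * v t' - v t * u t' = 0` for `t < t'`, then the function
`s ↦ u t * v s - v t * u s` vanishes at both `t` and `t'`, so by Rolle's theorem its derivative
`u t * v′ c - v t * u′ c` vanishes at some `c` between them. At `t = c = t₀` this expression is the
regularity quantity, so by continuity it stays nonzero for `t, c` near `t₀`.
-/

open Set Filter Topology

theorem Set.OrdConnected.uniqueDiffOn {I : Set ℝ} (hI : I.OrdConnected) (hnt : I.Nontrivial) :
    UniqueDiffOn ℝ I :=
  uniqueDiffOn_convex hI.convex (hI.convex.nontrivial_iff_nonempty_interior.1 hnt)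

theorem exists_Ioo_inter_forall₂_of_eventually {I : Set ℝ} {t₀ : ℝ} {P : ℝ × ℝ → Prop}
    (h : ∀ᶠ p in 𝓝[I] t₀ ×ˢ 𝓝[I] t₀, P p) :
    ∃ ε > 0, ∀ t ∈ Ioo (t₀ - ε) (t₀ + ε) ∩ I, ∀ t' ∈ Ioo (t₀ - ε) (t₀ + ε) ∩ I, P (t, t') := by
  obtain ⟨s, hs, hsP⟩ := mem_prod_self_iff.1 h
  obtain ⟨ε, hε, hball⟩ := Metric.mem_nhdsWithin_iff.1 hs
  rw [Real.ball_eq_Ioo] at hball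
  exact ⟨ε, hε, fun t ht t' ht' => hsP (mk_mem_prod (hball ht) (hball ht'))⟩

theorem exists_mem_Ioo_cross_deriv_eq_zero {u v u' v' : ℝ → ℝ} {a b : ℝ} (hab : a < b)
    (hu : ContinuousOn u (Icc a b)) (hv : ContinuousOn v (Icc a b))
    (hu' : ∀ x ∈ Ioo a b, HasDerivAt u (u' x) x) (hv' : ∀ x ∈ Ioo a b, HasDerivAt v (v' x) x)
    (hcross : u a * v b - v a * u b = 0) :
    ∃ c ∈ Ioo a b, u a * v' c - v a * u' c = 0 :=
  exists_hasDerivAt_eq_zero (f := fun s => u a * v s - v a * u s) hab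
    ((continuousOn_const.mul hv).sub (continuousOn_const.mul hu)) (by simp only [hcross]; ring)
    fun x hx => ((hv' x hx).const_mul (u a)).sub ((hu' x hx).const_mul (v a))

theorem cross_ne_zero_of_forall_cross_deriv_ne_zero {J : Set ℝ} (hJ : J.OrdConnected)
    {u v u' v' : ℝ → ℝ} (hu : ∀ x ∈ J, HasDerivWithinAt u (u' x) J x)
    (hv : ∀ x ∈ J, HasDerivWithinAt v (v' x) J x)
    (hK : ∀ t ∈ J, ∀ c ∈ J, u t * v' c - v t * u' c ≠ 0) :
    ∀ t ∈ J, ∀ t' ∈ J, t ≠ t' → u t * v t' - v t * u t' ≠ 0 := by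
  intro t ht t' ht' hne hcross
  wlog hlt : t < t' generalizing t t'
  · exact this t' ht' t ht hne.symm (by linear_combination -hcross)
      (lt_of_le_of_ne (not_lt.1 hlt) hne.symm)
  have hIcc : Icc t t' ⊆ J := hJ.out ht ht'
  have hIoo : Ioo t t' ⊆ interior J :=
    interior_maximal (Ioo_subset_Icc_self.trans hIcc) isOpen_Ioo
  have hderiv {f f' : ℝ → ℝ} (hf : ∀ x ∈ J, HasDerivWithinAt f (f' x) J x) :
      ∀ x ∈ Ioo t t', HasDerivAt f (f' x) x := fun x hx =>
    (hf x (interior_subset (hIoo hx))).hasDerivAt (mem_interior_iff_mem_nhds.1 (hIoo hx))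
  have hcont {f f' : ℝ → ℝ} (hf : ∀ x ∈ J, HasDerivWithinAt f (f' x) J x) :
      ContinuousOn f (Icc t t') := fun x hx =>
    ((hf x (hIcc hx)).continuousWithinAt).mono hIcc
  obtain ⟨c, hc, hc0⟩ := exists_mem_Ioo_cross_deriv_eq_zero hlt (hcont hu) (hcont hv)
    (hderiv hu) (hderiv hv) hcross
  exact hK t ht c (hIcc (Ioo_subset_Icc_self hc)) hc0

theorem stmt13_general (I : Set ℝ) (hI : I.OrdConnected) (γ₁ γ₂ : ℝ → ℝ)
    (hγ₁ : ContDiffOn ℝ 2 γ₁ I) (hγ₂ : ContDiffOn ℝ 2 γ₂ I)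
    (t₀ : ℝ) (ht₀ : t₀ ∈ I)
    (hreg : derivWithin γ₁ I t₀ * derivWithin (derivWithin γ₂ I) I t₀ -
        derivWithin (derivWithin γ₁ I) I t₀ * derivWithin γ₂ I t₀ ≠ 0) :
    ∃ ε > 0, ∀ t ∈ Set.Ioo (t₀ - ε) (t₀ + ε) ∩ I, ∀ t' ∈ Set.Ioo (t₀ - ε) (t₀ + ε) ∩ I,
      t ≠ t' →
        derivWithin γ₁ I t * derivWithin γ₂ I t' -
          derivWithin γ₂ I t * derivWithin γ₁ I t' ≠ 0 := by
  rcases I.subsingleton_or_nontrivial with hsub | hnt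
  · exact ⟨1, one_pos, fun t ht t' ht' hne => absurd (hsub ht.2 ht'.2) hne⟩
  have hU := hI.uniqueDiffOn hnt
  have hu : ContDiffOn ℝ 1 (derivWithin γ₁ I) I := hγ₁.derivWithin hU (by norm_num)
  have hv : ContDiffOn ℝ 1 (derivWithin γ₂ I) I := hγ₂.derivWithin hU (by norm_num)
  have hK_near : ∀ᶠ p in 𝓝[I] t₀ ×ˢ 𝓝[I] t₀,
      derivWithin γ₁ I p.1 * derivWithin (derivWithin γ₂ I) I p.2 -
        derivWithin γ₂ I p.1 * derivWithin (derivWithin γ₁ I) I p.2 ≠ 0 := by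
    have hlim {f : ℝ → ℝ} (hf : ContinuousOn f I) : Tendsto f (𝓝[I] t₀) (𝓝 (f t₀)) :=
      (hf t₀ ht₀).tendsto
    have hu' := hu.continuousOn_derivWithin hU le_rfl
    have hv' := hv.continuousOn_derivWithin hU le_rfl
    refine Tendsto.eventually_ne
      ((((hlim hu.continuousOn).comp tendsto_fst).mul ((hlim hv').comp tendsto_snd)).sub
        (((hlim hv.continuousOn).comp tendsto_fst).mul ((hlim hu').comp tendsto_snd))) ?_
    simpa only [mul_comm (derivWithin γ₂ I t₀)] using hreg
  obtain ⟨ε, hε, hK⟩ := exists_Ioo_inter_forall₂_of_eventually hK_near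
  have hasDerivWithinAt {f : ℝ → ℝ} (hf : ContDiffOn ℝ 1 f I) (x : ℝ)
      (hx : x ∈ Ioo (t₀ - ε) (t₀ + ε) ∩ I) :
      HasDerivWithinAt f (derivWithin f I x) (Ioo (t₀ - ε) (t₀ + ε) ∩ I) x :=
    ((hf.differentiableOn one_ne_zero x hx.2).hasDerivWithinAt).mono inter_subset_right
  exact ⟨ε, hε, cross_ne_zero_of_forall_cross_deriv_ne_zero (ordConnected_Ioo.inter hI)
    (hasDerivWithinAt hu) (hasDerivWithinAt hv) hK⟩

/-- Near a point of a `C²` plane curve where the velocity is nonzero and the regularity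
condition `γ₁′γ₂″ − γ₁″γ₂′ ≠ 0` holds, no two distinct parameters give parallel tangent
vectors (local convexity). Derivatives are taken within the interval `I`. -/
theorem stmt13 (I : Set ℝ) (hI : I.OrdConnected) (γ₁ γ₂ : ℝ → ℝ)
    (hγ₁ : ContDiffOn ℝ 2 γ₁ I) (hγ₂ : ContDiffOn ℝ 2 γ₂ I)
    (t₀ : ℝ) (ht₀ : t₀ ∈ I)
    (hvel : (derivWithin γ₁ I t₀, derivWithin γ₂ I t₀) ≠ (0, 0))
    (hreg : derivWithin γ₁ I t₀ * derivWithin (derivWithin γ₂ I) I t₀ -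
        derivWithin (derivWithin γ₁ I) I t₀ * derivWithin γ₂ I t₀ ≠ 0) :
    ∃ ε > 0, ∀ t ∈ Set.Ioo (t₀ - ε) (t₀ + ε) ∩ I, ∀ t' ∈ Set.Ioo (t₀ - ε) (t₀ + ε) ∩ I,
      t ≠ t' →
        derivWithin γ₁ I t * derivWithin γ₂ I t' -
          derivWithin γ₂ I t * derivWithin γ₁ I t' ≠ 0 :=
  stmt13_general I hI γ₁ γ₂ hγ₁ hγ₂ t₀ ht₀ hreg
end
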